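/- Assume (A1) r has all coordinates strictly positive and (A2) M_{ij} ≤ 0 for all i ≠ j. Then there exists a constant B > 0 such that for all ε ∈ (0,1] and all t ≥ 0, the solution θ^{(ε)} of the DLN ODE with initial condition θ_i^{(ε)}(0) = C_i ε^{k_i} satisfies ‖θ^{(ε)}(t)‖ ≤ B, where ‖·‖ is the Euclidean norm on ℝ^d. -/

import Mathlib

/-!
Along the DLN flow with `M = XᵀX`, `r = Xᵀy`, the residual loss `‖Xθ - y‖²` has derivative
`-2 ∑ᵢ θᵢ (rᵢ - (Mθ)ᵢ)²`, and every coordinate `θᵢ` stays positive (it solves the linear equation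
`θ̇ᵢ = θᵢ aᵢ(t)`), so the loss never increases and `‖Xθ(t)‖` is bounded by a constant that is
uniform in `ε` because `θ(0) ≤ C` coordinatewise. Under (A1) and (A2) the matrix `X` is
injective: if `Xv = 0`, then off-diagonal nonpositivity of `M` gives `‖X|v|‖² ≤ ‖Xv‖² = 0`,
hence `r ⬝ |v| = y ⬝ X|v| = 0`, which forces `v = 0` as `r > 0`. So `‖θ(t)‖ ≤ K ‖Xθ(t)‖`.
-/

open Matrix Set Real
open WithLp (toLp)

section Derivatives

variable {𝕜 ι m : Type*} [NontriviallyNormedField 𝕜] [Fintype ι]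
  {φ ψ : 𝕜 → ι → 𝕜} {φ' ψ' : ι → 𝕜} {t : 𝕜}

theorem HasDerivAt.dotProduct (hφ : HasDerivAt φ φ' t) (hψ : HasDerivAt ψ ψ' t) :
    HasDerivAt (fun τ => φ τ ⬝ᵥ ψ τ) (φ' ⬝ᵥ ψ t + φ t ⬝ᵥ ψ') t :=
  (HasDerivAt.fun_sum fun i _ => (hasDerivAt_pi.1 hφ i).fun_mul (hasDerivAt_pi.1 hψ i)).congr_deriv
    (by rw [Finset.sum_add_distrib]; rfl)

theorem HasDerivAt.mulVec (A : Matrix m ι 𝕜) (hφ : HasDerivAt φ φ' t) :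
    HasDerivAt (fun τ => A *ᵥ φ τ) (A *ᵥ φ') t :=
  hasDerivAt_pi.2 fun l => by
    simp only [Matrix.mulVec]
    exact HasDerivAt.fun_sum fun j _ => (hasDerivAt_pi.1 hφ j).const_mul (A l j)

end Derivatives

theorem ne_zero_of_hasDerivAt_eq_mul {f a : ℝ → ℝ} {T : ℝ} (hT : 0 ≤ T) (hf0 : f 0 ≠ 0)
    (ha : ContinuousOn a (Icc 0 T)) (hf : ∀ t ∈ Icc 0 T, HasDerivAt f (f t * a t) t) :
    f T ≠ 0 := by
  obtain ⟨K, hK⟩ := isCompact_Icc.bddBelow_image ha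
  -- `(f²)' = 2 a f² ≥ 2 K f²`, so the integrating factor `exp (-2 K t)` makes `f²` monotone.
  set g : ℝ → ℝ := fun t => f t ^ 2 * exp (-(2 * K) * t)
  have hg : ∀ t ∈ Icc 0 T,
      HasDerivAt g (2 * f t ^ 2 * (a t - K) * exp (-(2 * K) * t)) t := by
    intro t ht
    exact (((hf t ht).fun_pow 2).fun_mul ((hasDerivAt_id t).const_mul (-(2 * K))).exp).congr_deriv
      (by simp only [id, Nat.cast_ofNat]; ring)
  have hmono : MonotoneOn g (Icc 0 T) := by
    refine monotoneOn_of_hasDerivWithinAt_nonneg (convex_Icc 0 T)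
      (f' := fun t => 2 * f t ^ 2 * (a t - K) * exp (-(2 * K) * t))
      (fun t ht => (hg t ht).continuousAt.continuousWithinAt) (fun t ht => ?_) fun t ht => ?_
    · exact (hg t (interior_subset ht)).hasDerivWithinAt
    · have : 0 ≤ a t - K := sub_nonneg.2 (hK (mem_image_of_mem a (interior_subset ht)))
      positivity
  have hgT : g 0 ≤ g T := hmono (left_mem_Icc.2 hT) (right_mem_Icc.2 hT) hT
  intro hfT
  have hg0 : 0 < g 0 := by positivity
  have hgT' : g T = 0 := by simp [g, hfT]
  linarith

theorem pos_of_hasDerivAt_eq_mul {f a : ℝ → ℝ} (hf0 : 0 < f 0) (ha : ContinuousOn a (Ici 0))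
    (hf : ∀ t ≥ 0, HasDerivAt f (f t * a t) t) {T : ℝ} (hT : 0 ≤ T) : 0 < f T := by
  by_contra! hfT
  obtain ⟨s, hs, hfs⟩ := intermediate_value_Icc' hT
    (fun t ht => (hf t ht.1).continuousAt.continuousWithinAt) ⟨hfT, hf0.le⟩
  exact ne_zero_of_hasDerivAt_eq_mul hs.1 hf0.ne' (ha.mono Icc_subset_Ici_self)
    (fun t ht => hf t ht.1) hfs

section Quadratic

variable {ι m R : Type*} [Fintype ι] [Fintype m]

theorem mulVec_dotProduct_mulVec_self [CommSemiring R] (X : Matrix m ι R) (v : ι → R) :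
    (X *ᵥ v) ⬝ᵥ (X *ᵥ v) = v ⬝ᵥ ((Xᵀ * X) *ᵥ v) := by
  rw [← mulVec_mulVec, dotProduct_mulVec v, vecMul_transpose]

theorem abs_dotProduct_mulVec_abs_le {M : Matrix ι ι ℝ} (hM : ∀ i j, i ≠ j → M i j ≤ 0)
    (v : ι → ℝ) : |v| ⬝ᵥ (M *ᵥ |v|) ≤ v ⬝ᵥ (M *ᵥ v) := by
  simp only [dotProduct, mulVec, Finset.mul_sum, Pi.abs_apply]
  refine Finset.sum_le_sum fun i _ => Finset.sum_le_sum fun j _ => ?_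
  rcases eq_or_ne i j with rfl | hij
  · exact le_of_eq (by linear_combination M i i * abs_mul_abs_self (v i))
  · nlinarith [hM i j hij, abs_mul_abs_self (v i), abs_mul (v i) (v j), le_abs_self (v i * v j)]

theorem mulVec_injective_of_pos_of_offDiag_nonpos {X : Matrix m ι ℝ} {y : m → ℝ}
    (hr : ∀ i, 0 < (Xᵀ *ᵥ y) i) (hM : ∀ i j, i ≠ j → (Xᵀ * X) i j ≤ 0) :
    Function.Injective X.mulVec := by
  suffices h : ∀ v, X *ᵥ v = 0 → v = 0 from
    fun a b hab => sub_eq_zero.1 (h _ (by rw [mulVec_sub, hab, sub_self]))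
  intro v hv
  have hXabs : X *ᵥ |v| = 0 := by
    rw [← dotProduct_self_eq_zero]
    refine le_antisymm ?_ (Finset.sum_nonneg fun i _ => mul_self_nonneg _)
    calc (X *ᵥ |v|) ⬝ᵥ (X *ᵥ |v|) = |v| ⬝ᵥ ((Xᵀ * X) *ᵥ |v|) :=
          mulVec_dotProduct_mulVec_self X |v|
      _ ≤ v ⬝ᵥ ((Xᵀ * X) *ᵥ v) := abs_dotProduct_mulVec_abs_le hM v
      _ = 0 := by rw [← mulVec_dotProduct_mulVec_self, hv, dotProduct_zero]
  -- `Xᵀy ⬝ |v| = y ⬝ X|v| = 0`, a sum of nonnegative terms `(Xᵀy)ᵢ |vᵢ|` with `(Xᵀy)ᵢ > 0`.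
  have hr0 : (Xᵀ *ᵥ y) ⬝ᵥ |v| = 0 := by
    rw [mulVec_transpose, ← dotProduct_mulVec, hXabs, dotProduct_zero]
  ext i
  have := (Finset.sum_eq_zero_iff_of_nonneg fun i _ =>
    mul_nonneg (hr i).le (abs_nonneg (v i))).1 hr0 i (Finset.mem_univ i)
  simpa [(hr i).ne'] using this

theorem exists_norm_le_mul_norm_mulVec [DecidableEq ι] {X : Matrix m ι ℝ}
    (hX : Function.Injective X.mulVec) :
    ∃ K : NNReal, ∀ v : ι → ℝ, ‖toLp 2 v‖ ≤ K * ‖toLp 2 (X *ᵥ v)‖ := by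
  have hinj : Function.Injective (toLpLin 2 2 X) := fun a b hab =>
    WithLp.ofLp_injective 2 (hX (by simpa using congrArg WithLp.ofLp hab))
  obtain ⟨K, -, hK⟩ := (toLpLin 2 2 X).injective_iff_antilipschitz.1 hinj
  exact ⟨K, fun v => ZeroHomClass.bound_of_antilipschitz _ hK (toLp 2 v)⟩

theorem norm_toLp_two_le_of_abs_le {v w : ι → ℝ} (h : ∀ i, |v i| ≤ |w i|) :
    ‖toLp 2 v‖ ≤ ‖toLp 2 w‖ := by
  simp only [EuclideanSpace.norm_eq, Real.norm_eq_abs]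
  exact Real.sqrt_le_sqrt (Finset.sum_le_sum fun i _ => pow_le_pow_left₀ (abs_nonneg _) (h i) 2)

theorem norm_toLp_two_eq_sqrt_dotProduct (v : ι → ℝ) : ‖toLp 2 v‖ = √(v ⬝ᵥ v) := by
  simp [EuclideanSpace.norm_eq, dotProduct, sq]

end Quadratic

section DLN

variable {ι m : Type*} [Fintype ι] [Fintype m]

def dlnField (M : Matrix ι ι ℝ) (r θ : ι → ℝ) : ι → ℝ := fun i => θ i * (r i - (M *ᵥ θ) i)

theorem pos_of_hasDerivAt_dlnField {M : Matrix ι ι ℝ} {r : ι → ℝ} {θ : ℝ → ι → ℝ}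
    (hθ : ∀ t ≥ 0, HasDerivAt θ (dlnField M r (θ t)) t) (h0 : ∀ i, 0 < θ 0 i) {t : ℝ}
    (ht : 0 ≤ t) (i : ι) : 0 < θ t i := by
  have hcont : ContinuousOn θ (Ici 0) := fun t ht => (hθ t ht).continuousAt.continuousWithinAt
  refine pos_of_hasDerivAt_eq_mul (h0 i) ?_ (fun t ht => hasDerivAt_pi.1 (hθ t ht) i) ht
  exact (continuous_const.sub ((continuous_apply i).comp
    (continuous_const.matrix_mulVec continuous_id))).comp_continuousOn hcont

theorem residual_dotProduct_mulVec_dlnField (X : Matrix m ι ℝ) (y : m → ℝ) (v : ι → ℝ) :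
    (X *ᵥ v - y) ⬝ᵥ (X *ᵥ dlnField (Xᵀ * X) (Xᵀ *ᵥ y) v) =
      -∑ i, v i * ((Xᵀ *ᵥ y) i - ((Xᵀ * X) *ᵥ v) i) ^ 2 := by
  rw [dotProduct_mulVec, ← mulVec_transpose, mulVec_sub, mulVec_mulVec, dotProduct,
    ← Finset.sum_neg_distrib]
  refine Finset.sum_congr rfl fun i _ => ?_
  simp only [dlnField, Pi.sub_apply]
  ring

theorem antitoneOn_norm_residual_of_hasDerivAt_dlnField {X : Matrix m ι ℝ} {y : m → ℝ}
    {θ : ℝ → ι → ℝ}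
    (hθ : ∀ t ≥ 0, HasDerivAt θ (dlnField (Xᵀ * X) (Xᵀ *ᵥ y) (θ t)) t)
    (hθ_nonneg : ∀ t ≥ 0, ∀ i, 0 ≤ θ t i) :
    AntitoneOn (fun t => ‖toLp 2 (X *ᵥ θ t - y)‖) (Ici 0) := by
  set e : ℝ → m → ℝ := fun t => X *ᵥ θ t - y
  set e' : ℝ → m → ℝ := fun t => X *ᵥ dlnField (Xᵀ * X) (Xᵀ *ᵥ y) (θ t)
  have he : ∀ t ≥ 0, HasDerivAt (fun τ => e τ ⬝ᵥ e τ) (e' t ⬝ᵥ e t + e t ⬝ᵥ e' t) t :=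
    fun t ht => (((hθ t ht).mulVec X).sub_const y).dotProduct (((hθ t ht).mulVec X).sub_const y)
  have hsq : AntitoneOn (fun t => e t ⬝ᵥ e t) (Ici 0) := by
    refine antitoneOn_of_hasDerivWithinAt_nonpos (convex_Ici 0)
      (fun t ht => (he t ht).continuousAt.continuousWithinAt)
      (fun t ht => (he t (interior_subset ht)).hasDerivWithinAt) fun t ht => ?_
    have ht : 0 ≤ t := interior_subset (s := Ici (0 : ℝ)) ht
    have : e t ⬝ᵥ e' t ≤ 0 := by
      rw [residual_dotProduct_mulVec_dlnField, neg_nonpos]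
      exact Finset.sum_nonneg fun i _ => mul_nonneg (hθ_nonneg t ht i) (sq_nonneg _)
    rw [dotProduct_comm]
    linarith
  intro s hs t ht hst
  simp only [norm_toLp_two_eq_sqrt_dotProduct]
  exact Real.sqrt_le_sqrt (hsq hs ht hst)

end DLN

theorem dln_bounded_general (n d : ℕ)
    (X : Matrix (Fin n) (Fin d) ℝ) (y : Fin n → ℝ)
    (M : Matrix (Fin d) (Fin d) ℝ) (r : Fin d → ℝ)
    (hM : M = Xᵀ * X) (hr : r = Xᵀ *ᵥ y)
    (hA1 : ∀ i, 0 < r i)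
    (hA2 : ∀ i j, i ≠ j → M i j ≤ 0)
    (C k : Fin d → ℝ) (hC : ∀ i, 0 < C i) (hk : ∀ i, 0 < k i) :
    ∃ B > (0 : ℝ), ∀ ε ∈ Set.Ioc (0 : ℝ) 1, ∀ θ : ℝ → Fin d → ℝ,
      (∀ i, θ 0 i = C i * ε ^ k i) →
      (∀ t ≥ (0 : ℝ), ∀ i,
        HasDerivAt (fun τ => θ τ i) (θ t i * (r i - (M *ᵥ θ t) i)) t) →
      ∀ t ≥ (0 : ℝ), Real.sqrt (∑ i, (θ t i) ^ 2) ≤ B := by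
  subst hM hr
  obtain ⟨K, hK⟩ :=
    exists_norm_le_mul_norm_mulVec (mulVec_injective_of_pos_of_offDiag_nonpos hA1 hA2)
  set L := ‖LinearMap.toContinuousLinearMap (toLpLin 2 2 X)‖
  refine ⟨K * (L * ‖toLp 2 C‖ + 2 * ‖toLp 2 y‖) + 1, by positivity,
    fun ε hε θ hθ0 hode t ht => ?_⟩
  have hθ : ∀ t ≥ 0, HasDerivAt θ (dlnField (Xᵀ * X) (Xᵀ *ᵥ y) (θ t)) t :=
    fun t ht => hasDerivAt_pi.2 (hode t ht)
  have hθ0_pos (i : Fin d) : 0 < θ 0 i := hθ0 i ▸ mul_pos (hC i) (rpow_pos_of_pos hε.1 _)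
  have hθ0_le (i : Fin d) : θ 0 i ≤ C i :=
    hθ0 i ▸ mul_le_of_le_one_right (hC i).le (rpow_le_one hε.1.le hε.2 (hk i).le)
  have hres : ‖toLp 2 (X *ᵥ θ t - y)‖ ≤ ‖toLp 2 (X *ᵥ θ 0 - y)‖ :=
    antitoneOn_norm_residual_of_hasDerivAt_dlnField hθ
      (fun t ht i => (pos_of_hasDerivAt_dlnField hθ hθ0_pos ht i).le) self_mem_Ici ht ht
  have hXθ0 : ‖toLp 2 (X *ᵥ θ 0)‖ ≤ L * ‖toLp 2 C‖ := calc
    ‖toLp 2 (X *ᵥ θ 0)‖ ≤ L * ‖toLp 2 (θ 0)‖ :=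
      (LinearMap.toContinuousLinearMap (toLpLin 2 2 X)).le_opNorm (toLp 2 (θ 0))
    _ ≤ L * ‖toLp 2 C‖ := by
      gcongr
      exact norm_toLp_two_le_of_abs_le fun i => abs_le_abs_of_nonneg (hθ0_pos i).le (hθ0_le i)
  have hnorm : √(∑ i, θ t i ^ 2) = ‖toLp 2 (θ t)‖ := by simp [EuclideanSpace.norm_eq]
  have hXθt := norm_sub_norm_le (toLp 2 (X *ᵥ θ t)) (toLp 2 y)
  have hres0 := norm_sub_le (toLp 2 (X *ᵥ θ 0)) (toLp 2 y)
  rw [← WithLp.toLp_sub] at hXθt hres0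
  rw [hnorm]
  calc ‖toLp 2 (θ t)‖ ≤ K * ‖toLp 2 (X *ᵥ θ t)‖ := hK _
    _ ≤ K * (L * ‖toLp 2 C‖ + 2 * ‖toLp 2 y‖) := by gcongr; linarith
    _ ≤ _ := le_add_of_nonneg_right zero_le_one

/-- Lemma 2: Under (A1) and (A2), the trajectories of the DLN ODE started
from `θᵢ(0) = Cᵢ ε^{kᵢ}` are bounded in Euclidean norm, uniformly over `ε ∈ (0,1]` and
`t ≥ 0`. -/
theorem dln_bounded (n d : ℕ) (hn : 0 < n) (hd : 0 < d)
    (X : Matrix (Fin n) (Fin d) ℝ) (y : Fin n → ℝ)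
    (M : Matrix (Fin d) (Fin d) ℝ) (r : Fin d → ℝ)
    (hM : M = Xᵀ * X) (hr : r = Xᵀ *ᵥ y)
    (hA1 : ∀ i, 0 < r i)
    (hA2 : ∀ i j, i ≠ j → M i j ≤ 0)
    (C k : Fin d → ℝ) (hC : ∀ i, 0 < C i) (hk : ∀ i, 0 < k i) :
    ∃ B > (0 : ℝ), ∀ ε ∈ Set.Ioc (0 : ℝ) 1, ∀ θ : ℝ → Fin d → ℝ,
      (∀ i, θ 0 i = C i * ε ^ k i) →
      (∀ t ≥ (0 : ℝ), ∀ i,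
        HasDerivAt (fun τ => θ τ i) (θ t i * (r i - (M *ᵥ θ t) i)) t) →
      ∀ t ≥ (0 : ℝ), Real.sqrt (∑ i, (θ t i) ^ 2) ≤ B :=
  dln_bounded_general n d X y M r hM hr hA1 hA2 C k hC hk
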